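/- If all k sets X_1,…,X_k have the same cardinality n, then the number of eventually constant k-tuples equals n^{k(n−1)} · (n^k − (n−1)^k). -/

import Mathlib

universe u

variable {k : ℕ} {X : Fin (k + 1) → Type u}


/-- The endomorphism of the disjoint union `Σ i, X i` induced by a cyclic tuple of
functions `f i : X i → X (i + 1)` (indices modulo the number of sets). -/
def step (f : ∀ i : Fin (k + 1), X i → X (i + 1)) : (Σ i, X i) → (Σ i, X i) :=
  fun p => ⟨p.1 + 1, f p.1 p.2⟩

open Fin.CommRing in
lemma step_iterate_fst (f : ∀ i : Fin (k + 1), X i → X (i + 1)) (p : Σ i, X i) (m : ℕ) :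
    ((step f)^[m] p).1 = p.1 + (m : Fin (k + 1)) := by
  induction m with
  | zero => simp
  | succ m ih =>
    rw [Function.iterate_succ_apply']
    show ((step f)^[m] p).1 + 1 = _
    rw [ih]; push_cast; ring

open Fin.CommRing in
/-- The composite `f k ∘ ⋯ ∘ f 0 : X 0 → X 0` of a cyclic tuple of functions. -/
def comp (f : ∀ i : Fin (k + 1), X i → X (i + 1)) (v : X 0) : X 0 :=
  have h : ((step f)^[k + 1] (⟨0, v⟩ : Σ i, X i)).1 = 0 := by
    rw [step_iterate_fst]; simp
  h ▸ ((step f)^[k + 1] (⟨0, v⟩ : Σ i, X i)).2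

/-- A cyclic tuple of functions is eventually constant if some iterate of its
composite `X 0 → X 0` is a constant map. -/
def EventuallyConstant (f : ∀ i : Fin (k + 1), X i → X (i + 1)) : Prop :=
  ∃ (m : ℕ) (c : X 0), ∀ v : X 0, (comp f)^[m] v = c

attribute [local instance] Classical.propDecidable

section PerLemmas

variable {S : Type*} (F : S → S)

/-- A point is periodic if some positive iterate returns to it. -/
def PerPt (p : S) : Prop := ∃ m, 0 < m ∧ F^[m] p = p

variable {F}

lemma PerPt.apply {p : S} (h : PerPt F p) : PerPt F (F p) := by
  obtain ⟨m, hm, hp⟩ := h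
  exact ⟨m, hm, by rw [← Function.iterate_succ_apply, Function.iterate_succ_apply', hp]⟩

lemma PerPt.iterate {p : S} (h : PerPt F p) (j : ℕ) : PerPt F (F^[j] p) := by
  induction j with
  | zero => exact h
  | succ j ih => rw [Function.iterate_succ_apply']; exact ih.apply

lemma PerPt.iterate_mul_eq {p : S} {m : ℕ} (hp : F^[m] p = p) (l : ℕ) : F^[m * l] p = p := by
  induction l with
  | zero => simp
  | succ l ih => rw [Nat.mul_succ, Function.iterate_add_apply, hp, ih]

lemma PerPt.inj {p q : S} (hp : PerPt F p) (hq : PerPt F q) (h : F p = F q) : p = q := by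
  obtain ⟨m, hm, hpm⟩ := hp
  obtain ⟨l, hl, hql⟩ := hq
  have h1 : F^[m * l] p = p := PerPt.iterate_mul_eq hpm l
  have h2 : F^[m * l] q = q := by
    have := PerPt.iterate_mul_eq hql m; rwa [Nat.mul_comm] at this
  have hml : 1 ≤ m * l := Nat.one_le_iff_ne_zero.2 (Nat.mul_ne_zero hm.ne' hl.ne')
  have e : m * l = (m * l - 1) + 1 := by omega
  rw [← h1, ← h2, e, Function.iterate_add_apply, Function.iterate_add_apply]
  simp [h]

lemma PerPt.pred {p : S} (hp : PerPt F p) : ∃ q, F q = p ∧ PerPt F q := by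
  obtain ⟨m, hm, hpm⟩ := hp
  refine ⟨F^[m - 1] p, ?_, PerPt.iterate ⟨m, hm, hpm⟩ (m - 1)⟩
  have e : F (F^[m-1] p) = F^[m-1+1] p := (Function.iterate_succ_apply' F (m-1) p).symm
  have : m - 1 + 1 = m := by omega
  rw [e, this, hpm]

/-- every forward orbit in a finite type contains a periodic point. -/
lemma exists_perPt_iterate [Finite S] (F : S → S) (p : S) : ∃ j, PerPt F (F^[j] p) := by
  obtain ⟨a, b, hab, h⟩ := Finite.exists_ne_map_eq_of_infinite (fun m : ℕ => F^[m] p)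
  rcases Nat.lt_or_ge a b with hlt | hge
  · refine ⟨a, b - a, by omega, ?_⟩
    rw [← Function.iterate_add_apply]
    have : b - a + a = b := by omega
    rw [this]; exact h.symm
  · have hlt : b < a := by omega
    refine ⟨b, a - b, by omega, ?_⟩
    rw [← Function.iterate_add_apply]
    have : a - b + b = a := by omega
    rw [this]; exact h

lemma PerPt.fixed_of_not_active {p : S} {active : S → Prop}
    (hfix : ∀ q, ¬ active q → F q = q) (hp : PerPt F p) (hact : active p) (j : ℕ) :
    active (F^[j] p) := by
  by_contra hnot
  obtain ⟨m, hm, hpm⟩ := hp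
  have hfixj : ∀ d, F^[d] (F^[j] p) = F^[j] p := fun d =>
    Function.iterate_fixed (hfix _ hnot) d
  have : F^[m * (j + 1)] p = p := PerPt.iterate_mul_eq hpm (j + 1)
  have hge : j ≤ m * (j + 1) := by nlinarith
  have : p = F^[j] p := by
    conv_lhs => rw [← this]
    have e : m * (j + 1) = (m * (j + 1) - j) + j := by omega
    rw [e, Function.iterate_add_apply, hfixj]
  rw [← this] at hnot; exact hnot hact

end PerLemmas


section Graded

/-- tuples of functions defined on subsets `B i` of the layers. -/
abbrev PTuple (B : ∀ i : Fin (k + 1), Finset (X i)) : Type u :=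
  ∀ i : Fin (k + 1), {x // x ∈ B i} → X (i + 1)

/-- the total extension of a partial tuple: acts as a step where defined, identity elsewhere -/
noncomputable def pext (B : ∀ i : Fin (k + 1), Finset (X i)) (ψ : PTuple B) : (Σ i, X i) → (Σ i, X i) :=
  fun p => if h : p.2 ∈ B p.1 then ⟨p.1 + 1, ψ p.1 ⟨p.2, h⟩⟩ else p

noncomputable def coreL {B : ∀ i : Fin (k + 1), Finset (X i)} (ψ : PTuple B) (i : Fin (k + 1)) :
    Finset (X i) :=
  (B i).filter (fun x => PerPt (pext B ψ) ⟨i, x⟩)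

variable {B : ∀ i : Fin (k + 1), Finset (X i)} {ψ : PTuple B}

lemma pext_mem {p : Σ i, X i} (h : p.2 ∈ B p.1) :
    pext B ψ p = ⟨p.1 + 1, ψ p.1 ⟨p.2, h⟩⟩ := dif_pos h

lemma pext_not_mem {p : Σ i, X i} (h : ¬ p.2 ∈ B p.1) : pext B ψ p = p := dif_neg h

lemma mem_coreL {i : Fin (k + 1)} {x : X i} :
    x ∈ coreL ψ i ↔ x ∈ B i ∧ PerPt (pext B ψ) ⟨i, x⟩ := by
  classical
  simp [coreL]

lemma fin_add_right_cancel {i j : Fin (k + 1)} (h : i + 1 = j + 1) : i = j :=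
  add_right_cancel h

/-- second components of equal sigma pairs with equal (proved) first components -/
lemma sigma_snd_eq {i : Fin (k+1)} {x y : X i} (h : (⟨i, x⟩ : Σ i, X i) = ⟨i, y⟩) : x = y := by
  have := (Sigma.mk.inj_iff.1 h).2
  exact eq_of_heq this

lemma orbit_mem_of_perPt {p : Σ i, X i} (hper : PerPt (pext B ψ) p) (hp : p.2 ∈ B p.1)
    (j : ℕ) : ((pext B ψ)^[j] p).2 ∈ B ((pext B ψ)^[j] p).1 :=
  PerPt.fixed_of_not_active (fun _ h => pext_not_mem h) hper hp j

lemma coreL_step {i : Fin (k + 1)} {x : X i} (hx : x ∈ coreL ψ i) (hB : x ∈ B i) :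
    ψ i ⟨x, hB⟩ ∈ coreL ψ (i + 1) := by
  obtain ⟨hBx, hper⟩ := mem_coreL.1 hx
  have hstep : pext B ψ ⟨i, x⟩ = ⟨i + 1, ψ i ⟨x, hB⟩⟩ := pext_mem hBx
  refine mem_coreL.2 ⟨?_, ?_⟩
  · have := orbit_mem_of_perPt hper hBx 1
    rwa [Function.iterate_one, hstep] at this
  · have := hper.apply
    rwa [hstep] at this

lemma coreL_inj {i : Fin (k + 1)} {x y : X i} (hx : x ∈ coreL ψ i) (hy : y ∈ coreL ψ i)
    (hBx : x ∈ B i) (hBy : y ∈ B i) (h : ψ i ⟨x, hBx⟩ = ψ i ⟨y, hBy⟩) : x = y := by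
  obtain ⟨_, hpx⟩ := mem_coreL.1 hx
  obtain ⟨_, hpy⟩ := mem_coreL.1 hy
  have : pext B ψ ⟨i, x⟩ = pext B ψ ⟨i, y⟩ := by
    rw [pext_mem hBx, pext_mem hBy, h]
  exact sigma_snd_eq (hpx.inj hpy this)

lemma coreL_surj {i : Fin (k + 1)} {y : X (i + 1)} (hy : y ∈ coreL ψ (i + 1)) :
    ∃ x, ∃ hx : x ∈ B i, x ∈ coreL ψ i ∧ ψ i ⟨x, hx⟩ = y := by
  obtain ⟨hBy, hpy⟩ := mem_coreL.1 hy
  obtain ⟨q, hq, hpq⟩ := hpy.pred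
  have hqB : q.2 ∈ B q.1 := by
    by_contra hnot
    rw [pext_not_mem hnot] at hq
    rw [hq] at hnot
    exact hnot hBy
  rw [pext_mem hqB] at hq
  have h1 : q.1 + 1 = i + 1 := congrArg Sigma.fst hq
  have h1' : q.1 = i := fin_add_right_cancel h1
  obtain ⟨j, xq⟩ := q
  dsimp at h1' hq hqB
  subst h1'
  refine ⟨xq, hqB, mem_coreL.2 ⟨hqB, hpq⟩, sigma_snd_eq hq⟩


/-- orbits agree for two maps that agree on a predicate holding along the orbit. -/
lemma iterate_congr_orbit {S : Type*} {F G : S → S} {p : S} (P : S → Prop)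
    (hp : ∀ j, P (F^[j] p)) (hFG : ∀ q, P q → F q = G q) : ∀ j, F^[j] p = G^[j] p := by
  intro j
  induction j with
  | zero => rfl
  | succ j ih =>
    rw [Function.iterate_succ_apply', Function.iterate_succ_apply', ih, ← ih,
      hFG _ (hp j), ih]

/-- a periodic orbit avoids any forward-invariant predicate not holding at the base point. -/
lemma orbit_avoid {S : Type*} {F : S → S} {p : S} (Q : S → Prop) (hper : PerPt F p)
    (hp : ¬ Q p) (hinv : ∀ q, Q q → Q (F q)) (j : ℕ) : ¬ Q (F^[j] p) := by
  intro hQ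
  obtain ⟨m, hm, hpm⟩ := hper
  have hlater : ∀ d, Q (F^[d] (F^[j] p)) := by
    intro d
    induction d with
    | zero => exact hQ
    | succ d ih => rw [Function.iterate_succ_apply']; exact hinv _ ih
  have hmul : F^[m * (j + 1)] p = p := PerPt.iterate_mul_eq hpm (j + 1)
  have hge : j ≤ m * (j + 1) := by nlinarith
  have : F^[m * (j+1)] p = F^[m * (j+1) - j] (F^[j] p) := by
    rw [← Function.iterate_add_apply]
    congr 1
    omega
  have hQp : Q p := by rw [← hmul, this]; exact hlater _
  exact hp hQp

/-- every point of an injective self-map of a finite type is periodic. -/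
lemma perPt_of_injective {T : Type*} [Finite T] {e : T → T} (he : Function.Injective e)
    (q : T) : PerPt e q := by
  obtain ⟨a, b, hab, h⟩ := Finite.exists_ne_map_eq_of_infinite (fun m : ℕ => e^[m] q)
  rcases Nat.lt_or_ge a b with hlt | hge
  · refine ⟨b - a, by omega, ?_⟩
    have : e^[a] (e^[b-a] q) = e^[a] q := by
      rw [← Function.iterate_add_apply]
      have : a + (b - a) = b := by omega
      rw [this]; exact h.symm
    exact (he.iterate a) this
  · have hlt : b < a := by omega
    refine ⟨a - b, by omega, ?_⟩
    have : e^[b] (e^[a-b] q) = e^[b] q := by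
      rw [← Function.iterate_add_apply]
      have : b + (a - b) = a := by omega
      rw [this]; exact h
    exact (he.iterate b) this

section Fiber

variable {B C : ∀ i : Fin (k + 1), Finset (X i)}

/-- restriction of a partial tuple to the complement of `C`. -/
def restrictC (C : ∀ i : Fin (k + 1), Finset (X i)) (ψ : PTuple B) :
    PTuple (fun i => B i \ C i) :=
  fun i y => ψ i ⟨y.1, (Finset.mem_sdiff.1 y.2).1⟩

lemma restrict_agree (ψ : PTuple B) :
    ∀ q : Σ i, X i, q.2 ∈ B q.1 \ C q.1 →
      pext (fun i => B i \ C i) (restrictC C ψ) q = pext B ψ q := by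
  intro q hq
  have hB : q.2 ∈ B q.1 := (Finset.mem_sdiff.1 hq).1
  rw [pext_mem (ψ := restrictC C ψ) hq, pext_mem hB]; rfl

lemma core_invariant {ψ : PTuple B} :
    ∀ q : Σ i, X i, q.2 ∈ coreL ψ q.1 → (pext B ψ q).2 ∈ coreL ψ (pext B ψ q).1 := by
  intro q hq
  have hB : q.2 ∈ B q.1 := (mem_coreL.1 hq).1
  rw [pext_mem hB]
  exact coreL_step hq hB

/-- the bijection induced on the cores. -/
def coreMap (hCB : ∀ i, C i ⊆ B i) (ψ : PTuple B) (hψ : coreL ψ = C) (i : Fin (k + 1)) :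
    {x // x ∈ C i} → {x // x ∈ C (i + 1)} := fun x =>
  ⟨ψ i ⟨x.1, hCB i x.2⟩, by
    have hx : x.1 ∈ coreL ψ i := by rw [hψ]; exact x.2
    have h2 := coreL_step hx (hCB i x.2)
    rwa [hψ] at h2⟩

lemma coreMap_bijective (hCB : ∀ i, C i ⊆ B i) (ψ : PTuple B) (hψ : coreL ψ = C)
    (i : Fin (k + 1)) : Function.Bijective (coreMap hCB ψ hψ i) := by
  constructor
  · rintro ⟨x, hx⟩ ⟨y, hy⟩ h
    have h' := congrArg Subtype.val h
    dsimp [coreMap] at h'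
    have hx' : x ∈ coreL ψ i := by rw [hψ]; exact hx
    have hy' : y ∈ coreL ψ i := by rw [hψ]; exact hy
    exact Subtype.ext (coreL_inj hx' hy' (hCB i hx) (hCB i hy) h')
  · rintro ⟨y, hy⟩
    have hy' : y ∈ coreL ψ (i + 1) := by rw [hψ]; exact hy
    obtain ⟨x, hxB, hxcore, hval⟩ := coreL_surj hy'
    have hxC : x ∈ C i := by rw [← hψ]; exact hxcore
    exact ⟨⟨x, hxC⟩, Subtype.ext hval⟩

lemma coreL_restrictC (ψ : PTuple B) (hψ : coreL ψ = C) :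
    coreL (restrictC C ψ) = fun _ => (∅ : Finset (X _)) := by
  funext i
  rw [Finset.eq_empty_iff_forall_notMem]
  intro x hx
  obtain ⟨hD, hper⟩ := mem_coreL.1 hx
  have hall : ∀ j, (((pext _ (restrictC C ψ))^[j] ⟨i, x⟩).2 ∈
      B ((pext _ (restrictC C ψ))^[j] (⟨i, x⟩ : Σ i, X i)).1 \
        C ((pext _ (restrictC C ψ))^[j] (⟨i, x⟩ : Σ i, X i)).1) :=
    fun j => orbit_mem_of_perPt hper hD j
  have hperB : PerPt (pext B ψ) ⟨i, x⟩ := by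
    obtain ⟨m, hm, hpm⟩ := hper
    have := iterate_congr_orbit (F := pext _ (restrictC C ψ)) (G := pext B ψ)
      (fun q => q.2 ∈ B q.1 \ C q.1) hall (restrict_agree ψ) m
    exact ⟨m, hm, by rw [← this, hpm]⟩
  have hmem : x ∈ coreL ψ i := mem_coreL.2 ⟨(Finset.mem_sdiff.1 hD).1, hperB⟩
  rw [hψ] at hmem
  exact (Finset.mem_sdiff.1 hD).2 hmem

/-- gluing a graded bijection of `C` with an acyclic tuple on the complement. -/
noncomputable def glueT (hCB : ∀ i, C i ⊆ B i)
    (σ : ∀ i, {x // x ∈ C i} ≃ {x // x ∈ C (i + 1)})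
    (φ : PTuple (fun i => B i \ C i)) : PTuple B := fun i x =>
  if h : x.1 ∈ C i then (σ i ⟨x.1, h⟩).1 else φ i ⟨x.1, Finset.mem_sdiff.2 ⟨x.2, h⟩⟩

lemma glueT_mem (hCB : ∀ i, C i ⊆ B i) (σ : ∀ i, {x // x ∈ C i} ≃ {x // x ∈ C (i + 1)})
    (φ : PTuple (fun i => B i \ C i)) {i : Fin (k+1)} {x : X i} (hB : x ∈ B i) (h : x ∈ C i) :
    glueT hCB σ φ i ⟨x, hB⟩ = (σ i ⟨x, h⟩).1 := dif_pos h

lemma glueT_not_mem (hCB : ∀ i, C i ⊆ B i) (σ : ∀ i, {x // x ∈ C i} ≃ {x // x ∈ C (i + 1)})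
    (φ : PTuple (fun i => B i \ C i)) {i : Fin (k+1)} {x : X i} (hB : x ∈ B i) (h : ¬ x ∈ C i) :
    glueT hCB σ φ i ⟨x, hB⟩ = φ i ⟨x, Finset.mem_sdiff.2 ⟨hB, h⟩⟩ := dif_neg h

end Fiber

section Glue

variable {B C : ∀ i : Fin (k + 1), Finset (X i)} (hCB : ∀ i, C i ⊆ B i)
  (σ : ∀ i, {x // x ∈ C i} ≃ {x // x ∈ C (i + 1)}) (φ : PTuple (fun i => B i \ C i))

/-- the permutation of the core induced by `σ`. -/
def sigPerm : (Σ i, {x // x ∈ C i}) → (Σ i, {x // x ∈ C i}) :=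
  fun q => ⟨q.1 + 1, σ q.1 q.2⟩

lemma sigPerm_injective : Function.Injective (sigPerm σ) := by
  rintro ⟨i, x⟩ ⟨j, y⟩ h
  have h1 : i + 1 = j + 1 := congrArg Sigma.fst h
  have h1' : i = j := fin_add_right_cancel h1
  subst h1'
  have h2 := eq_of_heq (Sigma.mk.inj_iff.1 h).2
  exact congrArg _ ((σ i).injective h2)

lemma glue_semiconj :
    ∀ q : Σ i, {x // x ∈ C i},
      pext B (glueT hCB σ φ) ⟨q.1, q.2.1⟩ = ⟨(sigPerm σ q).1, ((sigPerm σ q).2 : X _)⟩ := by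
  rintro ⟨i, x, hx⟩
  have hB : x ∈ B i := hCB i hx
  rw [pext_mem (show ((⟨i, x⟩ : Σ i, X i)).2 ∈ B i from hB)]
  dsimp [sigPerm]
  rw [glueT_mem hCB σ φ hB hx]

lemma glue_semiconj_iterate :
    ∀ (m : ℕ) (q : Σ i, {x // x ∈ C i}),
      (pext B (glueT hCB σ φ))^[m] ⟨q.1, q.2.1⟩ =
        ⟨((sigPerm σ)^[m] q).1, (((sigPerm σ)^[m] q).2 : X _)⟩ := by
  intro m
  induction m with
  | zero => intro q; rfl
  | succ m ih =>
    intro q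
    rw [Function.iterate_succ_apply, Function.iterate_succ_apply,
      glue_semiconj hCB σ φ q, ih (sigPerm σ q)]

lemma glue_C_invariant :
    ∀ q : Σ i, X i, q.2 ∈ C q.1 →
      (pext B (glueT hCB σ φ) q).2 ∈ C (pext B (glueT hCB σ φ) q).1 := by
  rintro ⟨i, x⟩ hx
  have := glue_semiconj hCB σ φ ⟨i, ⟨x, hx⟩⟩
  dsimp at this
  rw [this]
  exact ((sigPerm σ ⟨i, ⟨x, hx⟩⟩).2).2

lemma coreL_glueT (hφ : coreL φ = fun _ => (∅ : Finset (X _))) :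
    coreL (glueT hCB σ φ) = C := by
  funext i
  apply Finset.ext
  intro x
  constructor
  · -- core ⊆ C
    intro hx
    by_contra hxC
    obtain ⟨hB, hper⟩ := mem_coreL.1 hx
    have havoid : ∀ j, ¬ ((pext B (glueT hCB σ φ))^[j] ⟨i, x⟩).2 ∈
        C ((pext B (glueT hCB σ φ))^[j] (⟨i, x⟩ : Σ i, X i)).1 :=
      orbit_avoid (fun q => q.2 ∈ C q.1) hper hxC (glue_C_invariant hCB σ φ)
    have hmem : ∀ j, ((pext B (glueT hCB σ φ))^[j] ⟨i, x⟩).2 ∈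
        B ((pext B (glueT hCB σ φ))^[j] (⟨i, x⟩ : Σ i, X i)).1 :=
      fun j => orbit_mem_of_perPt hper hB j
    have hall : ∀ j, ((pext B (glueT hCB σ φ))^[j] ⟨i, x⟩).2 ∈
        B ((pext B (glueT hCB σ φ))^[j] (⟨i, x⟩ : Σ i, X i)).1 \
          C ((pext B (glueT hCB σ φ))^[j] (⟨i, x⟩ : Σ i, X i)).1 :=
      fun j => Finset.mem_sdiff.2 ⟨hmem j, havoid j⟩
    have hagree : ∀ q : Σ i, X i, q.2 ∈ B q.1 \ C q.1 →
        pext B (glueT hCB σ φ) q = pext (fun i => B i \ C i) φ q := by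
      rintro ⟨j, y⟩ hq
      obtain ⟨hyB, hyC⟩ := Finset.mem_sdiff.1 hq
      rw [pext_mem (show ((⟨j, y⟩ : Σ i, X i)).2 ∈ B j from hyB), pext_mem hq]
      dsimp
      rw [glueT_not_mem hCB σ φ hyB hyC]
    obtain ⟨m, hm, hpm⟩ := hper
    have := iterate_congr_orbit (F := pext B (glueT hCB σ φ)) (G := pext _ φ)
      (fun q => q.2 ∈ B q.1 \ C q.1) hall hagree m
    have hperD : PerPt (pext (fun i => B i \ C i) φ) ⟨i, x⟩ := ⟨m, hm, by rw [← this, hpm]⟩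
    have : x ∈ coreL φ i := mem_coreL.2 ⟨Finset.mem_sdiff.2 ⟨hB, hxC⟩, hperD⟩
    rw [hφ] at this
    exact absurd this (Finset.notMem_empty x)
  · -- C ⊆ core
    intro hx
    refine mem_coreL.2 ⟨hCB i hx, ?_⟩
    obtain ⟨m, hm, hpm⟩ := perPt_of_injective (sigPerm_injective σ) ⟨i, ⟨x, hx⟩⟩
    refine ⟨m, hm, ?_⟩
    have := glue_semiconj_iterate hCB σ φ m ⟨i, ⟨x, hx⟩⟩
    dsimp at this
    rw [this, hpm]

end Glue

noncomputable def fiberEquiv {B C : ∀ i : Fin (k + 1), Finset (X i)} (hCB : ∀ i, C i ⊆ B i) :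
    {ψ : PTuple B // coreL ψ = C} ≃
      (∀ i, {x // x ∈ C i} ≃ {x // x ∈ C (i + 1)}) ×
        {φ : PTuple (fun i => B i \ C i) // coreL φ = fun _ => (∅ : Finset (X _))} where
  toFun p := ⟨fun i => Equiv.ofBijective _ (coreMap_bijective hCB p.1 p.2 i),
    ⟨restrictC C p.1, coreL_restrictC p.1 p.2⟩⟩
  invFun sp := ⟨glueT hCB sp.1 sp.2.1, coreL_glueT hCB sp.1 sp.2.1 sp.2.2⟩
  left_inv := by
    rintro ⟨ψ, hψ⟩
    apply Subtype.ext
    funext i x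
    dsimp
    by_cases h : x.1 ∈ C i
    · rw [glueT_mem _ _ _ x.2 h]
      rfl
    · rw [glueT_not_mem _ _ _ x.2 h]
      rfl
  right_inv := by
    rintro ⟨σ, φ, hφ⟩
    dsimp
    refine Prod.ext ?_ (Subtype.ext ?_)
    · funext i
      apply Equiv.ext
      rintro ⟨x, hx⟩
      apply Subtype.ext
      dsimp [coreMap]
      rw [glueT_mem _ _ _ (hCB i hx) hx]
    · funext i y
      dsimp [restrictC]
      rw [show (⟨y.1, (Finset.mem_sdiff.1 y.2).1⟩ : {x // x ∈ B i}) =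
        ⟨y.1, (Finset.mem_sdiff.1 y.2).1⟩ from rfl,
        glueT_not_mem _ _ _ (Finset.mem_sdiff.1 y.2).1 (Finset.mem_sdiff.1 y.2).2]

section CountUtil

lemma nat_card_sigma {ι : Type*} [Fintype ι] (f : ι → Type*) [∀ i, Finite (f i)] :
    Nat.card (Σ i, f i) = ∑ i, Nat.card (f i) := by
  letI : ∀ i, Fintype (f i) := fun i => Fintype.ofFinite (f i)
  simp [Nat.card_eq_fintype_card]

open Fin.CommRing in
lemma cyclic_const {F : Fin (k + 1) → ℕ} (h : ∀ i, F (i + 1) = F i) : ∀ i, F i = F 0 := by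
  have key : ∀ j : ℕ, F (j : Fin (k + 1)) = F 0 := by
    intro j
    induction j with
    | zero => norm_num
    | succ j ih =>
      have e : ((j + 1 : ℕ) : Fin (k + 1)) = (j : Fin (k + 1)) + 1 := by push_cast; ring
      rw [e, h, ih]
  intro i
  have := key i.val
  rwa [Fin.cast_val_eq_self] at this

/-- the ℤ-valued telescoping identity. -/
lemma telescope_sum (n s : ℕ) :
    ∑ t ∈ Finset.range s, ((s.choose (t + 1) * Nat.factorial (t + 1) : ℕ) : ℤ) ^ (k + 1) *
        ((n : ℤ) ^ ((k + 1) * (s - t - 1)) -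
          ((s - t - 1 : ℕ) : ℤ) ^ (k + 1) * (n : ℤ) ^ ((k + 1) * (s - t - 1 - 1))) =
      (s : ℤ) ^ (k + 1) * (n : ℤ) ^ ((k + 1) * (s - 1)) := by
  have hterm : ∀ t ∈ Finset.range s,
      ((s.choose (t + 1) * Nat.factorial (t + 1) : ℕ) : ℤ) ^ (k + 1) *
        ((n : ℤ) ^ ((k + 1) * (s - t - 1)) -
          ((s - t - 1 : ℕ) : ℤ) ^ (k + 1) * (n : ℤ) ^ ((k + 1) * (s - t - 1 - 1))) =
      (fun j => ((s.descFactorial (j + 1) : ℕ) : ℤ) ^ (k + 1) * (n : ℤ) ^ ((k + 1) * (s - j - 1))) t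
        - (fun j => ((s.descFactorial (j + 1) : ℕ) : ℤ) ^ (k + 1) *
            (n : ℤ) ^ ((k + 1) * (s - j - 1))) (t + 1) := by
    intro t ht
    have h1 : s.choose (t + 1) * Nat.factorial (t + 1) = s.descFactorial (t + 1) := by
      rw [Nat.descFactorial_eq_factorial_mul_choose, Nat.mul_comm]
    have h2 : s.descFactorial (t + 2) = (s - (t + 1)) * s.descFactorial (t + 1) :=
      Nat.descFactorial_succ s (t + 1)
    dsimp only
    rw [h1]
    have h3 : s - (t + 1) - 1 = s - t - 1 - 1 := by omega
    have h4 : s - (t + 1) = s - t - 1 := by omega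
    rw [h2, h4]
    push_cast
    ring
  rw [Finset.sum_congr rfl hterm, Finset.sum_range_sub']
  have hz : s.descFactorial (s + 1) = 0 := Nat.descFactorial_eq_zero_iff_lt.2 (by omega)
  simp [hz, Nat.descFactorial_one]

end CountUtil

section Counting

variable [∀ i, Fintype (X i)] {n : ℕ}

/-- the number of acyclic partial tuples on `B`. -/
noncomputable def acycCard (B : ∀ i : Fin (k + 1), Finset (X i)) : ℕ :=
  Nat.card {φ : PTuple B // coreL φ = fun _ => (∅ : Finset (X _))}

lemma card_PTuple (hcard : ∀ i, Fintype.card (X i) = n) {B : ∀ i : Fin (k + 1), Finset (X i)}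
    {s : ℕ} (hB : ∀ i, (B i).card = s) : Nat.card (PTuple B) = n ^ ((k + 1) * s) := by
  rw [Nat.card_pi]
  have h1 : ∀ i : Fin (k + 1), Nat.card ({x // x ∈ B i} → X (i + 1)) = n ^ s := by
    intro i
    rw [Nat.card_fun]
    congr 1
    · rw [Nat.card_eq_fintype_card, hcard]
    · rw [Nat.card_eq_fintype_card, Fintype.card_coe, hB]
  rw [Finset.prod_congr rfl (fun i _ => h1 i), Finset.prod_const, Finset.card_univ,
    Fintype.card_fin, ← pow_mul, mul_comm s]

lemma fib_eq_zero {B C : ∀ i : Fin (k + 1), Finset (X i)} (h : ¬ ∀ i, C i ⊆ B i) :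
    Nat.card {ψ : PTuple B // coreL ψ = C} = 0 := by
  have : IsEmpty {ψ : PTuple B // coreL ψ = C} := by
    constructor
    rintro ⟨ψ, hψ⟩
    exact h (fun i => hψ ▸ Finset.filter_subset _ _)
  exact Nat.card_of_isEmpty

lemma fib_eq {B C : ∀ i : Fin (k + 1), Finset (X i)} (hCB : ∀ i, C i ⊆ B i) :
    Nat.card {ψ : PTuple B // coreL ψ = C} =
      Nat.card (∀ i, {x // x ∈ C i} ≃ {x // x ∈ C (i + 1)}) *
        acycCard (fun i => B i \ C i) := by
  rw [Nat.card_congr (fiberEquiv hCB), Nat.card_prod]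
  rfl

lemma card_equivs {C : ∀ i : Fin (k + 1), Finset (X i)} {t : ℕ} (h : ∀ i, (C i).card = t) :
    Nat.card (∀ i, {x // x ∈ C i} ≃ {x // x ∈ C (i + 1)}) = (Nat.factorial t) ^ (k + 1) := by
  rw [Nat.card_pi]
  have h1 : ∀ i : Fin (k + 1), Nat.card ({x // x ∈ C i} ≃ {x // x ∈ C (i + 1)}) =
      Nat.factorial t := by
    intro i
    have hc : Fintype.card {x // x ∈ C i} = Fintype.card {x // x ∈ C (i + 1)} := by
      rw [Fintype.card_coe, Fintype.card_coe, h i, h (i + 1)]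
    rw [Nat.card_eq_fintype_card, Fintype.card_equiv (Fintype.equivOfCardEq hc),
      Fintype.card_coe, h i]
  rw [Finset.prod_congr rfl (fun i _ => h1 i), Finset.prod_const, Finset.card_univ,
    Fintype.card_fin]

lemma card_equivs_zero {C : ∀ i : Fin (k + 1), Finset (X i)}
    (h : ¬ ∀ i, (C i).card = (C 0).card) :
    Nat.card (∀ i, {x // x ∈ C i} ≃ {x // x ∈ C (i + 1)}) = 0 := by
  have h2 : ¬ ∀ i : Fin (k + 1), (C (i + 1)).card = (C i).card := by
    intro hc
    exact h (cyclic_const hc)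
  push_neg at h2
  obtain ⟨i, hi⟩ := h2
  have : IsEmpty ({x // x ∈ C i} ≃ {x // x ∈ C (i + 1)}) := by
    constructor
    intro e
    exact hi (by rw [← Fintype.card_coe (C (i+1)), ← Fintype.card_coe (C i),
      Fintype.card_congr e])
  have : IsEmpty (∀ i, {x // x ∈ C i} ≃ {x // x ∈ C (i + 1)}) :=
    ⟨fun f => this.false (f i)⟩
  exact Nat.card_of_isEmpty

end Counting

section MainCount

variable [∀ i, Fintype (X i)]

lemma acycCard_formula {n : ℕ} (hcard : ∀ i, Fintype.card (X i) = n) :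
    ∀ (s : ℕ) (B : ∀ i : Fin (k + 1), Finset (X i)), (∀ i, (B i).card = s) →
      (acycCard B : ℤ) =
        (n : ℤ) ^ ((k + 1) * s) - (s : ℤ) ^ (k + 1) * (n : ℤ) ^ ((k + 1) * (s - 1)) := by
  intro s
  induction s using Nat.strong_induction_on with
  | _ s IH =>
    intro B hB
    classical
    set fib : (∀ i : Fin (k + 1), Finset (X i)) → ℕ :=
      fun C => Nat.card {ψ : PTuple B // coreL ψ = C} with hfib
    -- partition of all partial tuples on B according to their core
    have hpart : Nat.card (PTuple B) = ∑ C : (∀ i, Finset (X i)), fib C := by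
      rw [Nat.card_congr (Equiv.sigmaFiberEquiv (fun ψ : PTuple B => coreL ψ)).symm]
      exact nat_card_sigma _
    -- the subfamilies indexed by core size
    set A : ℕ → Finset (∀ i : Fin (k + 1), Finset (X i)) :=
      fun t => Fintype.piFinset (fun i => Finset.powersetCard t (B i)) with hA
    have memA : ∀ {t C}, C ∈ A t ↔ ∀ i, C i ⊆ B i ∧ (C i).card = t := by
      intro t C
      rw [hA]
      simp only [Fintype.mem_piFinset, Finset.mem_powersetCard]
    have hdisj : (↑(Finset.range (s + 1)) : Set ℕ).PairwiseDisjoint A := by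
      intro a _ b _ hab
      simp only [Finset.disjoint_left]
      intro C hCa hCb
      exact hab (((memA.1 hCa) 0).2.symm.trans ((memA.1 hCb) 0).2)
    have hzero : ∀ C ∈ (Finset.univ : Finset (∀ i, Finset (X i))),
        C ∉ (Finset.range (s + 1)).biUnion A → fib C = 0 := by
      intro C _ hC
      by_cases hCB : ∀ i, C i ⊆ B i
      · by_cases hcards : ∀ i, (C i).card = (C 0).card
        · exfalso
          apply hC
          rw [Finset.mem_biUnion]
          refine ⟨(C 0).card, Finset.mem_range.2 ?_, memA.2 (fun i => ⟨hCB i, hcards i⟩)⟩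
          have := Finset.card_le_card (hCB 0)
          rw [hB 0] at this
          omega
        · show Nat.card {ψ : PTuple B // coreL ψ = C} = 0
          rw [fib_eq hCB, card_equivs_zero hcards, Nat.zero_mul]
      · exact fib_eq_zero hCB
    have hsum : ∑ C : (∀ i, Finset (X i)), fib C =
        ∑ t ∈ Finset.range (s + 1), ∑ C ∈ A t, fib C := by
      rw [← Finset.sum_biUnion hdisj]
      exact (Finset.sum_subset (Finset.subset_univ _) hzero).symm
    -- the t = 0 term is the unknown acyclic count
    have hA0 : A 0 = {fun _ => (∅ : Finset (X _))} := by
      apply Finset.ext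
      intro C
      rw [Finset.mem_singleton, memA]
      constructor
      · intro h
        funext i
        exact Finset.card_eq_zero.1 (h i).2
      · intro h
        subst h
        exact fun i => ⟨Finset.empty_subset _, Finset.card_empty⟩
    have ht0 : ∑ C ∈ A 0, fib C = acycCard B := by
      rw [hA0, Finset.sum_singleton]
      rfl
    -- positive t terms via the induction hypothesis
    have hterm : ∀ t ∈ Finset.range s, (∑ C ∈ A (t + 1), (fib C : ℤ)) =
        ((s.choose (t + 1) * Nat.factorial (t + 1) : ℕ) : ℤ) ^ (k + 1) *
          ((n : ℤ) ^ ((k + 1) * (s - t - 1)) -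
            ((s - t - 1 : ℕ) : ℤ) ^ (k + 1) * (n : ℤ) ^ ((k + 1) * (s - t - 1 - 1))) := by
      intro t ht
      rw [Finset.mem_range] at ht
      have hval : ∀ C ∈ A (t + 1), (fib C : ℤ) =
          ((Nat.factorial (t + 1) : ℕ) : ℤ) ^ (k + 1) *
            ((n : ℤ) ^ ((k + 1) * (s - t - 1)) -
              ((s - t - 1 : ℕ) : ℤ) ^ (k + 1) * (n : ℤ) ^ ((k + 1) * (s - t - 1 - 1))) := by
        intro C hC
        have hCB : ∀ i, C i ⊆ B i := fun i => (memA.1 hC i).1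
        have hCc : ∀ i, (C i).card = t + 1 := fun i => (memA.1 hC i).2
        have hsd : ∀ i, ((fun i => B i \ C i) i).card = s - (t + 1) := by
          intro i
          rw [Finset.card_sdiff_of_subset (hCB i), hB i, hCc i]
        have hIH := IH (s - (t + 1)) (by omega) (fun i => B i \ C i) hsd
        have hfc : fib C = Nat.card {ψ : PTuple B // coreL ψ = C} := rfl
        rw [hfc, fib_eq hCB, card_equivs hCc, Nat.cast_mul, hIH]
        have e1 : s - (t + 1) = s - t - 1 := by omega
        rw [e1]
        push_cast
        ring
      rw [Finset.sum_congr rfl hval, Finset.sum_const, nsmul_eq_mul]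
      have hcardA : (A (t + 1)).card = (s.choose (t + 1)) ^ (k + 1) := by
        rw [hA, Fintype.card_piFinset]
        have : ∀ i : Fin (k + 1), (Finset.powersetCard (t + 1) (B i)).card =
            s.choose (t + 1) := by
          intro i
          rw [Finset.card_powersetCard, hB i]
        rw [Finset.prod_congr rfl (fun i _ => this i), Finset.prod_const, Finset.card_univ,
          Fintype.card_fin]
      rw [hcardA]
      push_cast
      ring
    -- assemble
    have htot : Nat.card (PTuple B) = n ^ ((k + 1) * s) := card_PTuple hcard hB
    have key : ((n : ℤ) ^ ((k + 1) * s)) =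
        (acycCard B : ℤ) + ∑ t ∈ Finset.range s, (∑ C ∈ A (t + 1), (fib C : ℤ)) := by
      have := congrArg (fun x : ℕ => (x : ℤ)) (htot.symm.trans (hpart.trans hsum))
      push_cast at this
      rw [this, Finset.sum_range_succ']
      have ht0' : (∑ C ∈ A 0, (fib C : ℤ)) = (acycCard B : ℤ) := by
        rw [← Nat.cast_sum]
        exact_mod_cast congrArg (fun x : ℕ => (x : ℤ)) ht0
      rw [ht0']
      exact add_comm _ _
    rw [Finset.sum_congr rfl hterm, telescope_sum] at key
    linarith [key]

end MainCount

section Bridge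

lemma sigma_eta {p : Σ i, X i} {j : Fin (k + 1)} (h : p.1 = j) : p = ⟨j, h ▸ p.2⟩ := by
  cases p
  cases h
  rfl

open Fin.CommRing in
lemma step_comp (f : ∀ i : Fin (k + 1), X i → X (i + 1)) (v : X 0) :
    (step f)^[k + 1] (⟨0, v⟩ : Σ i, X i) = ⟨0, comp f v⟩ := by
  have h : ((step f)^[k + 1] (⟨0, v⟩ : Σ i, X i)).1 = 0 := by
    rw [step_iterate_fst]; simp
  exact sigma_eta h

lemma step_comp_iter (f : ∀ i : Fin (k + 1), X i → X (i + 1)) (m : ℕ) (v : X 0) :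
    (step f)^[(k + 1) * m] (⟨0, v⟩ : Σ i, X i) = ⟨0, (comp f)^[m] v⟩ := by
  induction m generalizing v with
  | zero => rw [Nat.mul_zero]; rfl
  | succ m ih =>
    have e : (k + 1) * (m + 1) = (k + 1) * m + (k + 1) := by ring
    rw [e, Function.iterate_add_apply, step_comp, ih (comp f v),
      ← Function.iterate_succ_apply]

end Bridge

section Bridge2

variable [∀ i, Fintype (X i)]

/-- the full-layer family. -/
noncomputable abbrev Bfull : ∀ i : Fin (k + 1), Finset (X i) := fun _ => Finset.univ

/-- a full tuple as a partial tuple on the full layers. -/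
noncomputable def toP (f : ∀ i : Fin (k + 1), X i → X (i + 1)) : PTuple (Bfull (X := X)) :=
  fun i x => f i x.1

lemma pext_toP (f : ∀ i : Fin (k + 1), X i → X (i + 1)) :
    pext (Bfull (X := X)) (toP f) = step f := by
  funext p
  rw [pext_mem (Finset.mem_univ _)]
  rfl

noncomputable def tupleEquiv : (∀ i : Fin (k + 1), X i → X (i + 1)) ≃ PTuple (Bfull (X := X)) where
  toFun := toP
  invFun ψ := fun i x => ψ i ⟨x, Finset.mem_univ x⟩
  left_inv f := rfl
  right_inv ψ := rfl

/-- cores at all the layers have the same cardinality. -/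
lemma coreL_card_const {B : ∀ i : Fin (k + 1), Finset (X i)} (ψ : PTuple B) :
    ∀ i, (coreL ψ i).card = (coreL ψ 0).card := by
  apply cyclic_const
  intro i
  have hbij := coreMap_bijective (C := coreL ψ) (fun i => Finset.filter_subset _ _) ψ rfl i
  have h2 := Fintype.card_of_bijective hbij
  rw [Fintype.card_coe, Fintype.card_coe] at h2
  exact h2.symm

lemma mem_core0_iff {f : ∀ i : Fin (k + 1), X i → X (i + 1)} {x : X 0} :
    x ∈ coreL (toP f) 0 ↔ PerPt (step f) ⟨0, x⟩ := by
  rw [mem_coreL, pext_toP]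
  simp

lemma EC_iff (f : ∀ i : Fin (k + 1), X i → X (i + 1)) :
    EventuallyConstant f ↔ ∀ i, (coreL (toP f) i).card = 1 := by
  constructor
  · rintro ⟨m, c, hc⟩
    have hc' : ∀ v, (comp f)^[m + 1] v = comp f c := by
      intro v
      rw [Function.iterate_succ_apply', hc]
    set c2 := comp f c with hc2def
    set M := m + 1 with hM
    have hfix : (comp f)^[M] c2 = c2 := hc' c2
    have hc2core : c2 ∈ coreL (toP f) 0 := by
      rw [mem_core0_iff]
      refine ⟨(k + 1) * M, by positivity, ?_⟩
      rw [step_comp_iter, hc' c2]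
    have hsub : ∀ x ∈ coreL (toP f) 0, x = c2 := by
      intro x hx
      obtain ⟨q, hq, hqx⟩ := mem_core0_iff.1 hx
      have h1 : (step f)^[q * ((k + 1) * M)] ⟨0, x⟩ = ⟨0, x⟩ :=
        PerPt.iterate_mul_eq hqx _
      have e : q * ((k + 1) * M) = (k + 1) * (M * q) := by ring
      rw [e, step_comp_iter] at h1
      have h2 : (comp f)^[M * q] x = c2 := by
        rw [Function.iterate_mul]
        calc ((comp f)^[M])^[q] x = ((comp f)^[M])^[q - 1] ((comp f)^[M] x) := by
              rw [← Function.iterate_succ_apply]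
              congr 1
              omega
          _ = ((comp f)^[M])^[q - 1] c2 := by rw [hc' x]
          _ = c2 := Function.iterate_fixed hfix _
      rw [h2] at h1
      exact (sigma_snd_eq h1).symm
    have hcore0 : coreL (toP f) 0 = {c2} :=
      Finset.eq_singleton_iff_unique_mem.2 ⟨hc2core, hsub⟩
    intro i
    rw [coreL_card_const (toP f) i, hcore0, Finset.card_singleton]
  · intro h
    obtain ⟨c, hc⟩ := Finset.card_eq_one.1 (h 0)
    have hcmem : c ∈ coreL (toP f) 0 := by rw [hc]; exact Finset.mem_singleton_self c
    have hcper : PerPt (step f) ⟨0, c⟩ := mem_core0_iff.1 hcmem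
    have hcfix : comp f c = c := by
      have h1 : PerPt (step f) ((step f)^[k + 1] ⟨0, c⟩) := hcper.iterate (k + 1)
      have h2 : (step f)^[k + 1] (⟨0, c⟩ : Σ i, X i) = ⟨0, comp f c⟩ := step_comp f c
      rw [h2] at h1
      have h3 : comp f c ∈ coreL (toP f) 0 := mem_core0_iff.2 h1
      rw [hc, Finset.mem_singleton] at h3
      exact h3
    have hreach : ∀ v : X 0, ∃ a, (comp f)^[a] v = c := by
      intro v
      obtain ⟨j, hj⟩ := exists_perPt_iterate (comp f) v
      obtain ⟨q, hq, hqj⟩ := hj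
      have hper : PerPt (step f) ⟨0, (comp f)^[j] v⟩ := by
        refine ⟨(k + 1) * q, by positivity, ?_⟩
        rw [step_comp_iter, hqj]
      have h4 : (comp f)^[j] v ∈ coreL (toP f) 0 := mem_core0_iff.2 hper
      rw [hc, Finset.mem_singleton] at h4
      exact ⟨j, h4⟩
    classical
    set a : X 0 → ℕ := fun v => Classical.choose (hreach v) with ha
    refine ⟨Finset.univ.sup a, c, ?_⟩
    intro v
    have hav : (comp f)^[a v] v = c := Classical.choose_spec (hreach v)
    have hle : a v ≤ Finset.univ.sup a := Finset.le_sup (Finset.mem_univ v)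
    have e : Finset.univ.sup a = (Finset.univ.sup a - a v) + a v := by omega
    rw [e, Function.iterate_add_apply, hav, Function.iterate_fixed hcfix]

end Bridge2

/-- If all `k+1` sets have the same cardinality `n`, the number of eventually constant
`(k+1)`-tuples equals `n^((k+1)(n−1)) · (n^(k+1) − (n−1)^(k+1))`. -/
theorem stmt3 (k n : ℕ) (hn : 1 ≤ n) (X : Fin (k + 1) → Type u) [∀ i, Fintype (X i)]
    (hcard : ∀ i, Fintype.card (X i) = n) :
    Nat.card {f : ∀ i : Fin (k + 1), X i → X (i + 1) // EventuallyConstant f} =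
      n ^ ((k + 1) * (n - 1)) * (n ^ (k + 1) - (n - 1) ^ (k + 1)) := by
  classical
  have h1 : Nat.card {f : ∀ i : Fin (k + 1), X i → X (i + 1) // EventuallyConstant f} =
      Nat.card {ψ : PTuple (Bfull (X := X)) // ∀ i, (coreL ψ i).card = 1} :=
    Nat.card_congr (Equiv.subtypeEquiv tupleEquiv (fun f => EC_iff f))
  set A1 : Finset (∀ i : Fin (k + 1), Finset (X i)) :=
    Fintype.piFinset (fun i => Finset.powersetCard 1 (Finset.univ : Finset (X i))) with hA1
  have memA1 : ∀ {C : ∀ i, Finset (X i)}, C ∈ A1 ↔ ∀ i, (C i).card = 1 := by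
    intro C
    rw [hA1]
    simp only [Fintype.mem_piFinset, Finset.mem_powersetCard]
    exact ⟨fun h i => (h i).2, fun h i => ⟨Finset.subset_univ _, h i⟩⟩
  have h2 : Nat.card {ψ : PTuple (Bfull (X := X)) // ∀ i, (coreL ψ i).card = 1} =
      ∑ C : (∀ i, Finset (X i)),
        Nat.card {p : {ψ : PTuple (Bfull (X := X)) // ∀ i, (coreL ψ i).card = 1} //
          coreL p.1 = C} := by
    rw [Nat.card_congr (Equiv.sigmaFiberEquiv
      (fun p : {ψ : PTuple (Bfull (X := X)) // ∀ i, (coreL ψ i).card = 1} => coreL p.1)).symm]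
    exact nat_card_sigma _
  have hfibval : ∀ C ∈ A1,
      Nat.card {p : {ψ : PTuple (Bfull (X := X)) // ∀ i, (coreL ψ i).card = 1} //
          coreL p.1 = C} =
        Nat.card {ψ : PTuple (Bfull (X := X)) // coreL ψ = C} := by
    intro C hC
    have hCc : ∀ i, (C i).card = 1 := memA1.1 hC
    apply Nat.card_congr
    refine ⟨fun p => ⟨p.1.1, by funext i; exact congrFun p.2 i⟩,
      fun q => ⟨⟨q.1, fun i => by rw [q.2]; exact hCc i⟩, q.2⟩, fun p => ?_, fun q => rfl⟩
    apply Subtype.ext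
    apply Subtype.ext
    rfl
  have hfibzero : ∀ C ∈ (Finset.univ : Finset (∀ i, Finset (X i))), C ∉ A1 →
      Nat.card {p : {ψ : PTuple (Bfull (X := X)) // ∀ i, (coreL ψ i).card = 1} //
        coreL p.1 = C} = 0 := by
    intro C _ hC
    have : IsEmpty {p : {ψ : PTuple (Bfull (X := X)) // ∀ i, (coreL ψ i).card = 1} //
        coreL p.1 = C} := by
      constructor
      rintro ⟨⟨ψ, hψ⟩, hp⟩
      exact hC (memA1.2 (fun i => by rw [← congrFun hp i]; exact hψ i))
    exact Nat.card_of_isEmpty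
  have h3 : Nat.card {ψ : PTuple (Bfull (X := X)) // ∀ i, (coreL ψ i).card = 1} =
      ∑ C ∈ A1, Nat.card {ψ : PTuple (Bfull (X := X)) // coreL ψ = C} := by
    rw [h2, ← Finset.sum_subset (Finset.subset_univ A1) hfibzero]
    exact Finset.sum_congr rfl hfibval
  -- evaluate each fiber in ℤ
  have hV : ∀ C ∈ A1, (Nat.card {ψ : PTuple (Bfull (X := X)) // coreL ψ = C} : ℤ) =
      (n : ℤ) ^ ((k + 1) * (n - 1)) -
        ((n - 1 : ℕ) : ℤ) ^ (k + 1) * (n : ℤ) ^ ((k + 1) * (n - 1 - 1)) := by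
    intro C hC
    have hCc : ∀ i, (C i).card = 1 := memA1.1 hC
    have hCB : ∀ i, C i ⊆ Bfull (X := X) i := fun i => Finset.subset_univ _
    have hsd : ∀ i, ((fun i => Bfull (X := X) i \ C i) i).card = n - 1 := by
      intro i
      rw [Finset.card_sdiff_of_subset (hCB i), Finset.card_univ, hcard i, hCc i]
    have := acycCard_formula hcard (n - 1) _ hsd
    rw [fib_eq hCB, card_equivs hCc]
    push_cast [this]
    simp [Nat.factorial]
  have hcardA1 : A1.card = n ^ (k + 1) := by
    rw [hA1, Fintype.card_piFinset]
    have : ∀ i : Fin (k + 1),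
        (Finset.powersetCard 1 (Finset.univ : Finset (X i))).card = n := by
      intro i
      rw [Finset.card_powersetCard, Finset.card_univ, hcard i, Nat.choose_one_right]
    rw [Finset.prod_congr rfl (fun i _ => this i), Finset.prod_const, Finset.card_univ,
      Fintype.card_fin]
  -- final computation in ℤ
  have hle : (n - 1) ^ (k + 1) ≤ n ^ (k + 1) := Nat.pow_le_pow_left (by omega) _
  have hZ : (Nat.card {f : ∀ i : Fin (k + 1), X i → X (i + 1) // EventuallyConstant f} : ℤ) =
      ((n ^ ((k + 1) * (n - 1)) * (n ^ (k + 1) - (n - 1) ^ (k + 1)) : ℕ) : ℤ) := by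
    rw [h1, h3]
    push_cast [Finset.sum_congr rfl hV]
    rw [Finset.sum_const, nsmul_eq_mul, hcardA1]
    rw [Nat.cast_sub hle]
    push_cast
    rcases Nat.lt_or_ge n 2 with h2n | h2n
    · have : n = 1 := by omega
      subst this
      norm_num
    · have e1 : n - 1 - 1 = n - 2 := by omega
      have e2 : (k + 1) * (n - 1) = (k + 1) + (k + 1) * (n - 2) := by
        have : n - 1 = (n - 2) + 1 := by omega
        rw [this]; ring
      rw [e1, e2, pow_add]
      ring
  exact Nat.cast_inj.1 hZ
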